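/- arXiv:2509.09831 — 4 statements merged into one kernel-verified Lean document; each statement's English description precedes it below -/
import Mathlib

section
/- Let Ω be a family of subsets of [n] such that for all pairwise distinct A, B, C ∈ Ω one has C ⊄ A ∪ B. Then for any two distinct A, B ∈ Ω, the linear functional x ↦ -⟨1_{(A∪B)^c}, x⟩ on ℝ^n vanishes on the characteristic vectors 1_A and 1_B and is strictly negative on 1_C for every C ∈ Ω \ {A,B}. Consequently, the segment [1_A, 1_B] is an edge (1-dimensional face) of the polytope conv{1_S : S ∈ Ω}, so the graph of this polytope is complete. -/
noncomputable section

/-- The dot product on `ℝ^n`. -/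
def dot {n : ℕ} (c x : Fin n → ℝ) : ℝ := ∑ i, c i * x i

/-- The vertex set of the 0/1-cube in `ℝ^n`. -/
def cube01 (n : ℕ) : Set (Fin n → ℝ) := {x | ∀ i, x i = 0 ∨ x i = 1}

/-- `F` is the vertex set of a face of the polytope `conv P`, where `P` is the set of
vertices of the polytope: there is a supporting linear functional attaining its maximum
on `P` exactly on `F`. -/
def IsFaceOf {n : ℕ} (P F : Set (Fin n → ℝ)) : Prop :=
  ∃ (c : Fin n → ℝ) (γ : ℝ), (∀ x ∈ P, dot c x ≤ γ) ∧ F = {x | x ∈ P ∧ dot c x = γ}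

/-- `{x, y}` is an edge (1-dimensional face) of the polytope `conv P`. -/
def IsPolytopeEdge {n : ℕ} (P : Set (Fin n → ℝ)) (x y : Fin n → ℝ) : Prop :=
  x ∈ P ∧ y ∈ P ∧ x ≠ y ∧ IsFaceOf P {x, y}

/-- The number of edges of the graph of the polytope `conv P` with one endpoint in `A`
and the other endpoint in `B`. -/
def polyEdgeCount {n : ℕ} (P A B : Set (Fin n → ℝ)) : ℕ :=
  {p : (Fin n → ℝ) × (Fin n → ℝ) | p.1 ∈ A ∧ p.2 ∈ B ∧ IsPolytopeEdge P p.1 p.2}.ncard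

/-- Adjacency in the hypercube graph `Q^d`: the two points differ in exactly one coordinate. -/
def cubeAdj {d : ℕ} (x y : Fin d → ℝ) : Prop := {i | x i ≠ y i}.ncard = 1

/-- The number of hypercube-neighbors of `x` belonging to `C`. -/
def cubeDeg {d : ℕ} (x : Fin d → ℝ) (C : Set (Fin d → ℝ)) : ℕ :=
  {y | y ∈ C ∧ cubeAdj x y}.ncard

/-- The number of hypercube edges with one endpoint in `A` and the other in `B`. -/
def cubeEdgeCount {d : ℕ} (A B : Set (Fin d → ℝ)) : ℕ :=
  {p : (Fin d → ℝ) × (Fin d → ℝ) | p.1 ∈ A ∧ p.2 ∈ B ∧ cubeAdj p.1 p.2}.ncard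

/-- `R ⊆ {0,1}^d` is `ε`-good: (R1) every vertex of `R` has more than `(1-ε)d`
hypercube-neighbors in `R`; (R2) every `C ⊆ {0,1}^d` with `|C| ≥ 2^d/20` satisfies
`|C ∩ R| ≥ 2^d/40`. -/
def epsGood {d : ℕ} (ε : ℝ) (R : Set (Fin d → ℝ)) : Prop :=
  R ⊆ cube01 d ∧
  (∀ x ∈ R, (1 - ε) * d < (cubeDeg x R : ℝ)) ∧
  (∀ C ⊆ cube01 d, (2 : ℝ) ^ d / 20 ≤ (C.ncard : ℝ) → (2 : ℝ) ^ d / 40 ≤ ((C ∩ R).ncard : ℝ))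

/-- Projection onto the first `d` coordinates. -/
def proj {n d : ℕ} (h : d ≤ n) (x : Fin n → ℝ) : Fin d → ℝ := fun i => x (Fin.castLE h i)

/-- The characteristic vector of a subset of `[n]`. -/
def charVec {n : ℕ} (A : Finset (Fin n)) : Fin n → ℝ := fun i => if i ∈ A then 1 else 0

/-- A face of the cube `[0,1]^n`, given by fixing the coordinates in the support of `σ`;
its dimension is the number of indices where `σ` is `none`. -/
def cubeFace {n : ℕ} (σ : Fin n → Option Bool) : Set (Fin n → ℝ) :=
  {z | z ∈ cube01 n ∧ ∀ i b, σ i = some b → z i = if b then 1 else 0}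

/-! The functional `-1_{Tᶜ}` takes the value `-#(S \ T)` at `1_S`, so it vanishes exactly at the
characteristic vectors of subsets of `T`. For `T = A ∪ B` the hypothesis on `Ω` says that the only
such members of `Ω` are `A` and `B`, so this functional exposes the edge `[1_A, 1_B]`. -/

open Finset

lemma charVec_injective {n : ℕ} : Function.Injective (charVec (n := n)) := by
  intro S T h
  ext i
  have hi := congrFun h i
  by_cases hS : i ∈ S <;> by_cases hT : i ∈ T <;> simp_all [charVec]

lemma dot_neg_indicator_compl_charVec {n : ℕ} (T S : Finset (Fin n)) :
    dot (fun i => if i ∈ T then (0 : ℝ) else -1) (charVec S) = -(#(S \ T) : ℝ) := by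
  have hterm : ∀ i, (if i ∈ T then (0 : ℝ) else -1) * charVec S i =
      -(if i ∈ S \ T then 1 else 0) := by
    intro i
    by_cases hT : i ∈ T <;> by_cases hS : i ∈ S <;> simp [charVec, hT, hS]
  simp only [dot, hterm, sum_neg_distrib, sum_boole, filter_mem_eq_inter, univ_inter]

lemma dot_neg_indicator_compl_charVec_eq_zero {n : ℕ} {T S : Finset (Fin n)} (h : S ⊆ T) :
    dot (fun i => if i ∈ T then (0 : ℝ) else -1) (charVec S) = 0 := by
  simp [dot_neg_indicator_compl_charVec, sdiff_eq_empty_iff_subset.2 h]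

lemma dot_neg_indicator_compl_charVec_neg {n : ℕ} {T S : Finset (Fin n)} (h : ¬ S ⊆ T) :
    dot (fun i => if i ∈ T then (0 : ℝ) else -1) (charVec S) < 0 := by
  have hcard : 0 < #(S \ T) := card_pos.2 (sdiff_nonempty.2 h)
  rw [dot_neg_indicator_compl_charVec]
  exact neg_neg_of_pos (by exact_mod_cast hcard)

lemma isFaceOf_pair_of_forall_lt {n : ℕ} {P : Set (Fin n → ℝ)} {x y : Fin n → ℝ}
    (c : Fin n → ℝ) (γ : ℝ) (hx : dot c x = γ) (hy : dot c y = γ)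
    (hlt : ∀ p ∈ P, p ≠ x → p ≠ y → dot c p < γ) (hxP : x ∈ P) (hyP : y ∈ P) :
    IsFaceOf P {x, y} := by
  have hle : ∀ p ∈ P, dot c p ≤ γ := by
    intro p hp
    by_cases hpx : p = x
    · exact (hpx ▸ hx).le
    by_cases hpy : p = y
    · exact (hpy ▸ hy).le
    exact (hlt p hp hpx hpy).le
  refine ⟨c, γ, hle, Set.ext fun p => ⟨?_, ?_⟩⟩
  · rintro (rfl | rfl)
    exacts [⟨hxP, hx⟩, ⟨hyP, hy⟩]
  · rintro ⟨hp, hpγ⟩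
    by_contra hpxy
    simp only [Set.mem_insert_iff, Set.mem_singleton_iff, not_or] at hpxy
    exact (hlt p hp hpxy.1 hpxy.2).ne hpγ

/-- If no member of the family `Ω` is contained in the union of two other members, then for
any two distinct `A, B ∈ Ω` the functional `x ↦ -⟨1_{(A∪B)ᶜ}, x⟩` vanishes on `1_A` and
`1_B`, is negative on `1_C` for every other `C ∈ Ω`, and consequently `{1_A, 1_B}` is an
edge of the polytope `conv {1_S : S ∈ Ω}`; hence the graph of this polytope is complete. -/
theorem graph_complete_of_no_union_containment {n : ℕ} (Ω : Finset (Finset (Fin n)))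
    (hΩ : ∀ A ∈ Ω, ∀ B ∈ Ω, ∀ C ∈ Ω, A ≠ B → A ≠ C → B ≠ C → ¬ C ⊆ A ∪ B)
    (A B : Finset (Fin n)) (hA : A ∈ Ω) (hB : B ∈ Ω) (hAB : A ≠ B) :
    (∀ i, (fun i => if i ∈ A ∪ B then (0 : ℝ) else -1) i = - (if i ∈ A ∪ B then (0:ℝ) else 1)) ∧
    dot (fun i => if i ∈ A ∪ B then (0 : ℝ) else -1) (charVec A) = 0 ∧
    dot (fun i => if i ∈ A ∪ B then (0 : ℝ) else -1) (charVec B) = 0 ∧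
    (∀ C ∈ Ω, C ≠ A → C ≠ B →
      dot (fun i => if i ∈ A ∪ B then (0 : ℝ) else -1) (charVec C) < 0) ∧
    IsPolytopeEdge {x | ∃ S ∈ Ω, charVec S = x} (charVec A) (charVec B) := by
  have hzeroA := dot_neg_indicator_compl_charVec_eq_zero (subset_union_left : A ⊆ A ∪ B)
  have hzeroB := dot_neg_indicator_compl_charVec_eq_zero (subset_union_right : B ⊆ A ∪ B)
  have hneg : ∀ C ∈ Ω, C ≠ A → C ≠ B →
      dot (fun i => if i ∈ A ∪ B then (0 : ℝ) else -1) (charVec C) < 0 := fun C hC hCA hCB =>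
    dot_neg_indicator_compl_charVec_neg (hΩ A hA B hB C hC hAB (Ne.symm hCA) (Ne.symm hCB))
  refine ⟨fun i => by beta_reduce; split_ifs <;> norm_num, hzeroA, hzeroB, hneg,
    ⟨A, hA, rfl⟩, ⟨B, hB, rfl⟩, charVec_injective.ne hAB, ?_⟩
  refine isFaceOf_pair_of_forall_lt _ 0 hzeroA hzeroB ?_ ⟨A, hA, rfl⟩ ⟨B, hB, rfl⟩
  rintro _ ⟨C, hC, rfl⟩ hCA hCB
  exact hneg C hC (ne_of_apply_ne charVec hCA) (ne_of_apply_ne charVec hCB)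
end
end

section
/- Let P be a polytope, let π be a coordinate projection, R = π(P), and let A ⊆ P be a set of vertices with A^c = P \ A. Define M = {x ∈ R : the fiber P_x = π^{-1}({x}) ∩ P meets both A and A^c}. Then the number of edges of the graph of P between A and A^c is at least |M|. -/
noncomputable section

/-!
Two points `a ∈ A`, `b ∈ P \ A` of one fiber agree on the first `d` coordinates. The points of
`P` agreeing with `a` wherever `a` and `b` agree form a face of `conv P` (the 0/1 points of a cube
face). If that face is `{a, b}`, it is a crossing edge; otherwise a third point `z` of it is
strictly closer to both `a` and `b` in Hamming distance, and one of the pairs `(z, b)`, `(a, z)`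
still crosses `A`. Each mixed fiber thus contains the first endpoint of a crossing edge.
-/

theorem cube01_finite (n : ℕ) : (cube01 n).Finite := by
  have : cube01 n = Set.univ.pi fun _ => ({0, 1} : Set ℝ) := by ext; simp [cube01]
  exact this ▸ Set.Finite.pi fun _ => Set.toFinite _

theorem hammingDist_add_hammingDist_of_forall_eq_or_eq {ι : Type*} [Fintype ι]
    {β : ι → Type*} [∀ i, DecidableEq (β i)] {a b z : ∀ i, β i}
    (hz : ∀ i, z i = a i ∨ z i = b i) :
    hammingDist a z + hammingDist z b = hammingDist a b := by
  simp only [hammingDist, Finset.card_filter, ← Finset.sum_add_distrib]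
  refine Finset.sum_congr rfl fun i _ => ?_
  rcases hz i with h | h <;> rw [h] <;> split_ifs <;> simp_all

theorem two_mul_sub_one_mul_le {a x : ℝ} (ha : a = 0 ∨ a = 1) (hx : x = 0 ∨ x = 1) :
    (2 * a - 1) * x ≤ (2 * a - 1) * a := by
  rcases ha with rfl | rfl <;> rcases hx with rfl | rfl <;> norm_num

theorem eq_of_two_mul_sub_one_mul_eq {a x : ℝ} (ha : a = 0 ∨ a = 1)
    (hx : x = 0 ∨ x = 1) (h : (2 * a - 1) * x = (2 * a - 1) * a) : x = a := by
  rcases ha with rfl | rfl <;> rcases hx with rfl | rfl <;> first | rfl | norm_num at h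

open Classical in
-- The face is cut out by the functional `Σ_{i ∈ S} (2 aᵢ - 1) xᵢ`.
theorem isFaceOf_agreeOn {n : ℕ} {P : Set (Fin n → ℝ)} (hP : P ⊆ cube01 n) {a : Fin n → ℝ}
    (ha : a ∈ cube01 n) (S : Set (Fin n)) :
    IsFaceOf P {z | z ∈ P ∧ ∀ i ∈ S, z i = a i} := by
  set c : Fin n → ℝ := fun i => if i ∈ S then 2 * a i - 1 else 0
  have hterm : ∀ z ∈ P, ∀ i, c i * z i ≤ c i * a i := fun z hz i => by
    by_cases hi : i ∈ S
    · simpa [c, hi] using two_mul_sub_one_mul_le (ha i) (hP hz i)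
    · simp [c, hi]
  refine ⟨c, dot c a, fun z hz => Finset.sum_le_sum fun i _ => hterm z hz i, ?_⟩
  ext z
  refine ⟨fun ⟨hz, hzS⟩ => ⟨hz, Finset.sum_congr rfl fun i _ => ?_⟩, fun ⟨hz, hza⟩ => ⟨hz, ?_⟩⟩
  · by_cases hi : i ∈ S <;> simp [c, hi, hzS]
  · intro i hi
    have := (Finset.sum_eq_sum_iff_of_le fun i _ => hterm z hz i).mp hza i (Finset.mem_univ i)
    exact eq_of_two_mul_sub_one_mul_eq (ha i) (hP hz i) (by simpa [c, hi] using this)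

theorem eq_or_eq_of_forall_eq_imp {n : ℕ} {a b z : Fin n → ℝ} (ha : a ∈ cube01 n)
    (hb : b ∈ cube01 n) (hz : z ∈ cube01 n) (hzab : ∀ i, a i = b i → z i = a i) (i : Fin n) :
    z i = a i ∨ z i = b i := by
  by_cases hi : a i = b i
  · exact .inl (hzab i hi)
  · rcases ha i with h | h <;> rcases hb i with h' | h' <;> rcases hz i with h'' | h'' <;>
      simp_all

theorem exists_isPolytopeEdge_crossing {n : ℕ} {P A : Set (Fin n → ℝ)} (hP : P ⊆ cube01 n)
    (hA : A ⊆ P) {a b : Fin n → ℝ} (ha : a ∈ A) (hb : b ∈ P \ A) :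
    ∃ a' ∈ A, ∃ b' ∈ P \ A, IsPolytopeEdge P a' b' ∧ ∀ i, a i = b i → a' i = a i ∧ b' i = a i := by
  induction h : hammingDist a b using Nat.strong_induction_on generalizing a b with
  | _ k ih =>
  have hab : a ≠ b := fun h => hb.2 (h ▸ ha)
  by_cases hmid : ∃ z ∈ P, (∀ i, a i = b i → z i = a i) ∧ z ≠ a ∧ z ≠ b
  · obtain ⟨z, hzP, hzab, hza, hzb⟩ := hmid
    have hsplit := hammingDist_add_hammingDist_of_forall_eq_or_eq
      (eq_or_eq_of_forall_eq_imp (hP (hA ha)) (hP hb.1) (hP hzP) hzab)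
    have hdist_az := hammingDist_pos.mpr hza.symm
    have hdist_zb := hammingDist_pos.mpr hzb
    by_cases hzA : z ∈ A
    · obtain ⟨a', ha', b', hb', hedge, hagree⟩ := ih _ (by omega) hzA hb rfl
      refine ⟨a', ha', b', hb', hedge, fun i hi => ?_⟩
      rw [← hzab i hi]
      exact hagree i (hzab i hi ▸ hi)
    · obtain ⟨a', ha', b', hb', hedge, hagree⟩ := ih _ (by omega) ha ⟨hzP, hzA⟩ rfl
      exact ⟨a', ha', b', hb', hedge, fun i hi => hagree i (hzab i hi).symm⟩
  · push Not at hmid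
    have hface : {z | z ∈ P ∧ ∀ i ∈ {i | a i = b i}, z i = a i} = {a, b} := by
      ext z
      refine ⟨fun ⟨hzP, hzab⟩ => ?_, ?_⟩
      · by_contra hz
        simp only [Set.mem_insert_iff, Set.mem_singleton_iff, not_or] at hz
        exact hz.2 (hmid z hzP hzab hz.1)
      · rintro (rfl | rfl)
        exacts [⟨hA ha, fun _ _ => rfl⟩, ⟨hb.1, fun i hi => hi.symm⟩]
    exact ⟨a, ha, b, hb, ⟨hA ha, hb.1, hab, hface ▸ isFaceOf_agreeOn hP (hP (hA ha)) _⟩,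
      fun i hi => ⟨rfl, hi.symm⟩⟩

/-- First part of the projection lemma: the number of edges of the graph of `conv P`
between `A` and `P \ A` is at least the number of fibers of the projection meeting
both `A` and `P \ A`. -/
theorem edges_ge_mixed_fibers {n d : ℕ} (hd : d ≤ n)
    (P : Set (Fin n → ℝ)) (hP : P ⊆ cube01 n) (A : Set (Fin n → ℝ)) (hA : A ⊆ P) :
    ({x : Fin d → ℝ | (∃ a ∈ A, proj hd a = x) ∧ ∃ b ∈ P \ A, proj hd b = x}).ncard
      ≤ polyEdgeCount P A (P \ A) := by
  set E := {p : (Fin n → ℝ) × (Fin n → ℝ) | p.1 ∈ A ∧ p.2 ∈ P \ A ∧ IsPolytopeEdge P p.1 p.2}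
  have hE : E.Finite := ((cube01_finite n).prod (cube01_finite n)).subset
    fun p hp => ⟨hP (hA hp.1), hP hp.2.1.1⟩
  have hfibers : {x : Fin d → ℝ | (∃ a ∈ A, proj hd a = x) ∧ ∃ b ∈ P \ A, proj hd b = x} ⊆
      (fun p => proj hd p.1) '' E := by
    rintro x ⟨⟨a, ha, rfl⟩, b, hb, hba⟩
    obtain ⟨a', ha', b', hb', hedge, hagree⟩ := exists_isPolytopeEdge_crossing hP hA ha hb
    exact ⟨(a', b'), ⟨ha', hb', hedge⟩, funext fun i => (hagree _ (congrFun hba i).symm).1⟩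
  exact (Set.ncard_le_ncard hfibers (hE.image _)).trans (Set.ncard_image_le hE)
end
end

section
/- (Harper's edge-isoperimetric inequality) For every d ≥ 1 and every subset C of the vertices of the d-dimensional hypercube graph Q^d, the number of edges of Q^d between C and its complement is at least |C| · log₂(2^d / |C|). -/
noncomputable section

/-!
Identify `{0,1}^d` with `Fin d → Bool` and induct on `d`, splitting `C` along the first
coordinate into two slices of sizes `a ≥ b`. The boundary edges of `C` are those of the two
slices inside `Q^(d-1)` together with at least `a - b` edges across, so it suffices that
`f_d(x) = x log₂ (2^d / x)` satisfies `f_{d+1}(a + b) ≤ f_d(a) + f_d(b) + (a - b)`. This is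
`a log a + b log b + 2b log 2 ≤ (a + b) log (a + b)`, i.e. `H(p) ≥ 2p log 2` for the binary
entropy on `[0, 1/2]`, which holds by concavity since `H(0) = 0` and `H(1/2) = log 2`.
-/

open Real
open scoped Finset

lemma two_mul_mul_log_two_le_binEntropy {p : ℝ} (h0 : 0 ≤ p) (h1 : p ≤ 2⁻¹) :
    2 * p * log 2 ≤ binEntropy p := by
  have h := strictConcave_binEntropy.concaveOn.2 (x := 0) (y := 2⁻¹) (by norm_num) (by norm_num)
    (by linarith : 0 ≤ 1 - 2 * p) (by linarith : 0 ≤ 2 * p) (by ring)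
  simp only [smul_eq_mul, binEntropy_zero, binEntropy_two_inv, mul_zero, zero_add] at h
  rwa [show 2 * p * 2⁻¹ = p by ring] at h

lemma mul_binEntropy_div_add {a b : ℝ} (ha : 0 < a) (hb : 0 < b) :
    (a + b) * binEntropy (b / (a + b)) = (a + b) * log (a + b) - a * log a - b * log b := by
  have hs : a + b ≠ 0 := by positivity
  rw [binEntropy, show 1 - b / (a + b) = a / (a + b) by field_simp; ring, inv_div, inv_div,
    log_div hs hb.ne', log_div hs ha.ne']
  field_simp
  ring

lemma mul_log_add_mul_log_add_le {a b : ℝ} (hb : 0 ≤ b) (hba : b ≤ a) :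
    a * log a + b * log b + 2 * b * log 2 ≤ (a + b) * log (a + b) := by
  obtain rfl | hb := hb.eq_or_lt
  · simp
  have ha : 0 < a := hb.trans_le hba
  have hs : 0 < a + b := by positivity
  have hp : b / (a + b) ≤ 2⁻¹ := by rw [div_le_iff₀ hs]; linarith
  have h := mul_le_mul_of_nonneg_left
    (two_mul_mul_log_two_le_binEntropy (by positivity) hp) hs.le
  rw [mul_binEntropy_div_add ha hb] at h
  have : (a + b) * (2 * (b / (a + b)) * log 2) = 2 * b * log 2 := by field_simp
  linarith

lemma mul_logb_add_mul_logb_add_le {a b : ℝ} (hb : 0 ≤ b) (hba : b ≤ a) :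
    a * logb 2 a + b * logb 2 b + 2 * b ≤ (a + b) * logb 2 (a + b) := by
  calc a * logb 2 a + b * logb 2 b + 2 * b
      = (a * log a + b * log b + 2 * b * log 2) / log 2 := by
        simp only [logb]
        field_simp
    _ ≤ (a + b) * log (a + b) / log 2 := by
        gcongr
        exact mul_log_add_mul_log_add_le hb hba
    _ = (a + b) * logb 2 (a + b) := by rw [logb, mul_div_assoc]

lemma mul_logb_two_pow_div (d : ℕ) (x : ℝ) :
    x * logb 2 (2 ^ d / x) = d * x - x * logb 2 x := by
  obtain rfl | hx := eq_or_ne x 0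
  · simp
  rw [logb_div (by positivity) hx, logb_pow, logb_self_eq_one one_lt_two]
  ring

lemma mul_logb_two_pow_succ_div_add_le (d : ℕ) {a b : ℝ} (ha : 0 ≤ a) (hb : 0 ≤ b) :
    (a + b) * logb 2 (2 ^ (d + 1) / (a + b)) ≤
      a * logb 2 (2 ^ d / a) + b * logb 2 (2 ^ d / b) + |a - b| := by
  wlog hba : b ≤ a generalizing a b
  · rw [add_comm a, abs_sub_comm]
    linarith [this hb ha (le_of_not_ge hba)]
  have := mul_logb_add_mul_logb_add_le hb hba
  simp only [mul_logb_two_pow_div, abs_of_nonneg (sub_nonneg.2 hba)]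
  push_cast
  linarith

lemma Fintype.sum_pi_fin_succ {β M : Type*} [Fintype β] [AddCommMonoid M] {n : ℕ}
    (f : (Fin (n + 1) → β) → M) : ∑ x, f x = ∑ a, ∑ x, f (Fin.cons a x) := by
  rw [← Fintype.sum_prod_type' (fun a x => f (Fin.cons a x))]
  exact (Fintype.sum_equiv (Fin.consEquiv fun _ => β) _ _ fun _ => rfl).symm

lemma Fintype.sum_sum_pi_fin_succ {β M : Type*} [Fintype β] [AddCommMonoid M] {n : ℕ}
    (f : (Fin (n + 1) → β) → (Fin (n + 1) → β) → M) :
    ∑ x, ∑ y, f x y = ∑ a, ∑ b, ∑ x, ∑ y, f (Fin.cons a x) (Fin.cons b y) := by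
  simp only [Fintype.sum_pi_fin_succ (n := n) (f := f _)]
  rw [Fintype.sum_pi_fin_succ]
  exact Finset.sum_congr rfl fun a _ => Finset.sum_comm

lemma hammingDist_cons {β : Type*} [DecidableEq β] {n : ℕ} (a b : β) (x y : Fin n → β) :
    hammingDist (Fin.cons a x : Fin (n + 1) → β) (Fin.cons b y) =
      (if a = b then 0 else 1) + hammingDist x y := by
  simp only [hammingDist, Finset.card_filter, Fin.sum_univ_succ, Fin.cons_zero, Fin.cons_succ]
  split_ifs <;> simp_all

lemma hammingDist_cons_eq_one {β : Type*} [DecidableEq β] {n : ℕ} (a b : β)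
    (x y : Fin n → β) :
    hammingDist (Fin.cons a x : Fin (n + 1) → β) (Fin.cons b y) = 1 ↔
      a = b ∧ hammingDist x y = 1 ∨ a ≠ b ∧ x = y := by
  rw [hammingDist_cons, ← hammingDist_eq_zero]
  split_ifs <;> simp_all

lemma abs_card_sub_card_le {α : Type*} [DecidableEq α] (s t : Finset α) :
    |(#s : ℝ) - #t| ≤ #(s \ t) + #(t \ s) := by
  have hs : (#s : ℝ) ≤ #(s \ t) + #t := by exact_mod_cast Finset.card_le_card_sdiff_add_card
  have ht : (#t : ℝ) ≤ #(t \ s) + #s := by exact_mod_cast Finset.card_le_card_sdiff_add_card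
  rw [abs_sub_le_iff]
  constructor <;> linarith [(#(s \ t)).cast_nonneg (α := ℝ), (#(t \ s)).cast_nonneg (α := ℝ)]

section

variable {d : ℕ}

def edgeBoundary (S : Finset (Fin d → Bool)) : Finset ((Fin d → Bool) × (Fin d → Bool)) :=
  {p | p.1 ∈ S ∧ p.2 ∉ S ∧ hammingDist p.1 p.2 = 1}

def slice (S : Finset (Fin (d + 1) → Bool)) (b : Bool) : Finset (Fin d → Bool) :=
  {x | Fin.cons b x ∈ S}

@[simp] lemma mem_slice {S : Finset (Fin (d + 1) → Bool)} {b : Bool} {x : Fin d → Bool} :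
    x ∈ slice S b ↔ Fin.cons b x ∈ S := by
  simp [slice]

lemma card_slice (S : Finset (Fin (d + 1) → Bool)) (b : Bool) :
    #(slice S b) = ∑ x, if Fin.cons b x ∈ S then 1 else 0 := by
  rw [slice, Finset.card_filter]

lemma card_eq_card_slice_add_card_slice (S : Finset (Fin (d + 1) → Bool)) :
    #S = #(slice S false) + #(slice S true) := by
  have h := Fintype.sum_pi_fin_succ (fun x => if x ∈ S then 1 else 0)
  rw [Fintype.sum_bool, ← card_slice, ← card_slice, ← Finset.card_filter,
    Finset.filter_univ_mem] at h
  omega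

lemma card_edgeBoundary_eq_sum (S : Finset (Fin d → Bool)) :
    #(edgeBoundary S) =
      ∑ x, ∑ y, if x ∈ S ∧ y ∉ S ∧ hammingDist x y = 1 then 1 else 0 := by
  rw [edgeBoundary, Finset.card_filter, ← Finset.univ_product_univ, Finset.sum_product]

lemma sum_edge_indicator_cons (S : Finset (Fin (d + 1) → Bool)) (a b : Bool) :
    (∑ x, ∑ y, if Fin.cons a x ∈ S ∧ Fin.cons b y ∉ S ∧
        hammingDist (Fin.cons a x : Fin (d + 1) → Bool) (Fin.cons b y) = 1 then 1 else 0) =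
      if a = b then #(edgeBoundary (slice S a)) else #(slice S a \ slice S b) := by
  simp only [hammingDist_cons_eq_one]
  split_ifs with hab
  · subst hab
    simp [card_edgeBoundary_eq_sum]
  · simp only [hab, false_and, false_or, ne_eq, not_false_eq_true, true_and]
    rw [← Finset.filter_univ_mem (slice S a \ slice S b), Finset.card_filter]
    refine Finset.sum_congr rfl fun x _ => ?_
    rw [Finset.sum_eq_single x (fun y _ hyx => if_neg fun h => hyx h.2.2.symm) (by simp)]
    simp

lemma card_edgeBoundary_succ (S : Finset (Fin (d + 1) → Bool)) :
    #(edgeBoundary S) = #(edgeBoundary (slice S false)) + #(edgeBoundary (slice S true)) +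
      (#(slice S false \ slice S true) + #(slice S true \ slice S false)) := by
  rw [card_edgeBoundary_eq_sum, Fintype.sum_sum_pi_fin_succ]
  simp only [sum_edge_indicator_cons, Fintype.sum_bool]
  simp only [Bool.true_eq_false, Bool.false_eq_true, if_true, if_false]
  omega

theorem card_mul_logb_le_card_edgeBoundary : ∀ {d : ℕ} (S : Finset (Fin d → Bool)),
    (#S : ℝ) * logb 2 (2 ^ d / #S) ≤ #(edgeBoundary S)
  | 0, S => by
    have : #S ≤ 1 := by simpa using S.card_le_univ
    interval_cases #S <;> simp
  | d + 1, S => by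
    rw [card_eq_card_slice_add_card_slice, card_edgeBoundary_succ]
    push_cast
    linarith [mul_logb_two_pow_succ_div_add_le d (#(slice S false)).cast_nonneg
        (#(slice S true)).cast_nonneg, abs_card_sub_card_le (slice S false) (slice S true),
      card_mul_logb_le_card_edgeBoundary (slice S false),
      card_mul_logb_le_card_edgeBoundary (slice S true)]

def cubeVertex (x : Fin d → Bool) : Fin d → ℝ := fun i => if x i then 1 else 0

lemma cubeVertex_apply_eq_iff (x y : Fin d → Bool) (i : Fin d) :
    cubeVertex x i = cubeVertex y i ↔ x i = y i := by
  unfold cubeVertex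
  cases x i <;> cases y i <;> norm_num

lemma cubeVertex_injective : Function.Injective (cubeVertex (d := d)) :=
  fun x y h => funext fun i => (cubeVertex_apply_eq_iff x y i).1 (congrFun h i)

lemma range_cubeVertex : Set.range (cubeVertex (d := d)) = cube01 d := by
  ext c
  refine ⟨?_, fun hc => ⟨fun i => c i = 1, funext fun i => ?_⟩⟩
  · rintro ⟨x, rfl⟩ i
    cases x i <;> simp [cubeVertex]
  · rcases hc i with h | h <;> simp [cubeVertex, h]

lemma cubeAdj_cubeVertex (x y : Fin d → Bool) :
    cubeAdj (cubeVertex x) (cubeVertex y) ↔ hammingDist x y = 1 := by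
  simp only [cubeAdj, ne_eq, cubeVertex_apply_eq_iff]
  rw [Set.ncard_eq_toFinset_card', Set.toFinset_ofPred, hammingDist]

lemma cubeEdgeCount_image_cubeVertex (S : Finset (Fin d → Bool)) :
    cubeEdgeCount (cubeVertex '' S) (cube01 d \ cubeVertex '' S) = #(edgeBoundary S) := by
  have : {p | p.1 ∈ cubeVertex '' S ∧ p.2 ∈ cube01 d \ cubeVertex '' S ∧ cubeAdj p.1 p.2} =
      Prod.map cubeVertex cubeVertex '' (edgeBoundary S : Set _) := by
    ext ⟨u, v⟩
    constructor
    · rintro ⟨⟨x, hx, rfl⟩, ⟨hv, hvS⟩, hadj⟩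
      obtain ⟨y, rfl⟩ : v ∈ Set.range cubeVertex := range_cubeVertex ▸ hv
      refine ⟨(x, y), ?_, rfl⟩
      simp only [edgeBoundary, Finset.coe_filter, Finset.mem_univ, true_and, Set.mem_ofPred_eq]
      exact ⟨hx, fun hy => hvS (Set.mem_image_of_mem _ hy), (cubeAdj_cubeVertex x y).1 hadj⟩
    · rintro ⟨⟨x, y⟩, hxy, ⟨⟩⟩
      obtain ⟨hx, hy, hadj⟩ : x ∈ S ∧ y ∉ S ∧ hammingDist x y = 1 := by
        simpa [edgeBoundary] using hxy
      exact ⟨Set.mem_image_of_mem _ hx, ⟨range_cubeVertex ▸ Set.mem_range_self y,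
        fun h => hy (cubeVertex_injective.mem_set_image.1 h)⟩, (cubeAdj_cubeVertex x y).2 hadj⟩
  rw [cubeEdgeCount, this, Set.ncard_image_of_injective _
    (cubeVertex_injective.prodMap cubeVertex_injective), Set.ncard_coe_finset]

end

theorem harper_edge_isoperimetry_general {d : ℕ}
    (C : Set (Fin d → ℝ)) (hC : C ⊆ cube01 d) :
    (C.ncard : ℝ) * Real.logb 2 ((2 : ℝ) ^ d / (C.ncard : ℝ))
      ≤ (cubeEdgeCount C (cube01 d \ C) : ℝ) := by
  obtain ⟨S, rfl⟩ := Set.subset_range_iff_exists_image_eq.1 (range_cubeVertex (d := d) ▸ hC)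
  rw [← S.toFinite.coe_toFinset, cubeEdgeCount_image_cubeVertex,
    Set.ncard_image_of_injective _ cubeVertex_injective, Set.ncard_coe_finset]
  exact card_mul_logb_le_card_edgeBoundary _

/-- Harper's edge-isoperimetric inequality for the hypercube: for every `C ⊆ {0,1}^d`,
the number of hypercube edges leaving `C` is at least `|C| · log₂(2^d / |C|)`. -/
theorem harper_edge_isoperimetry {d : ℕ} (hd : 1 ≤ d)
    (C : Set (Fin d → ℝ)) (hC : C ⊆ cube01 d) :
    (C.ncard : ℝ) * Real.logb 2 ((2 : ℝ) ^ d / (C.ncard : ℝ))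
      ≤ (cubeEdgeCount C (cube01 d \ C) : ℝ) :=
  harper_edge_isoperimetry_general C hC
end
end

section
/- Fix N > 0 and define f : (0, N] → ℝ by f(x) = x·log₂(N/x). Then f is concave and nonnegative, and for any fixed a > 0 the ratio x ↦ f(x+a)/f(x) is decreasing on the domain where both values are defined and positive. Consequently, if 0 < |B| ≤ 3N/4 and |B| ≤ D ≤ |B| + N/20 ≤ N, then f(D) ≥ (4/5)·f(|B|). -/
/-!
Writing `x * logb b (N / x) = (log N * x + negMulLog x) / log b` shows the function is concave on
`[0, ∞)`. For a concave function `f`, nonnegative at the ends of `[x, y + a]`, the chord bounds at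
`x + a` and at `y` multiply to `f (y + a) * f x ≤ f (x + a) * f y`, so `f (x + a) / f x` decreases
in `x`. Hence `f D / f |B| ≥ f (3N/4 + a) / f (3N/4)` with `a = D - |B| ∈ [0, N/20]`, and by the
minimum principle on `[3N/4, 4N/5]` the right side is at least `4/5`, since
`f (4N/5) / f (3N/4) = 4 log (5/4) / (3 log (4/3))` and `(4/3)^3 ≤ (5/4)^4`.
-/

open Real Set

lemma ConcaveOn.mul_sub_add_mul_sub_le {s : Set ℝ} {f : ℝ → ℝ} (hf : ConcaveOn ℝ s f)
    {p q z : ℝ} (hp : p ∈ s) (hq : q ∈ s) (hpz : p ≤ z) (hzq : z ≤ q) :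
    f p * (q - z) + f q * (z - p) ≤ f z * (q - p) := by
  rcases (hpz.trans hzq).eq_or_lt with rfl | hpq
  · obtain rfl : z = p := le_antisymm hzq hpz
    simp
  have hL : 0 < q - p := sub_pos.2 hpq
  have hz : (q - z) / (q - p) * p + (z - p) / (q - p) * q = z := by field_simp; ring
  have := hf.2 hp hq (div_nonneg (sub_nonneg.2 hzq) hL.le) (div_nonneg (sub_nonneg.2 hpz) hL.le)
    (by field_simp; ring)
  simp only [smul_eq_mul, hz] at this
  calc f p * (q - z) + f q * (z - p)
      = ((q - z) / (q - p) * f p + (z - p) / (q - p) * f q) * (q - p) := by field_simp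
    _ ≤ f z * (q - p) := by gcongr

lemma ConcaveOn.map_add_mul_map_le {s : Set ℝ} {f : ℝ → ℝ} (hf : ConcaveOn ℝ s f)
    {a x y : ℝ} (ha : 0 ≤ a) (hxy : x ≤ y) (hx : x ∈ s) (hya : y + a ∈ s)
    (hfx : 0 ≤ f x) (hfya : 0 ≤ f (y + a)) :
    f (y + a) * f x ≤ f (x + a) * f y := by
  rcases ha.eq_or_lt with rfl | ha_pos
  · simp [mul_comm]
  have hleft := hf.mul_sub_add_mul_sub_le hx hya (by linarith : x ≤ x + a) (by linarith)
  have hright := hf.mul_sub_add_mul_sub_le hx hya hxy (by linarith)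
  have hright_nonneg : 0 ≤ f x * (y + a - y) + f (y + a) * (y - x) := by
    have := mul_nonneg hfya (sub_nonneg.2 hxy); nlinarith
  have hleft_nonneg : 0 ≤ f x * (y + a - (x + a)) + f (y + a) * (x + a - x) := by
    have := mul_nonneg hfx (sub_nonneg.2 hxy); nlinarith
  have hprod := mul_le_mul hleft hright hright_nonneg (hleft_nonneg.trans hleft)
  -- the product of the two chord bounds exceeds `f x * f (y + a) * (y + a - x) ^ 2`
  -- by exactly `a * (y - x) * (f x - f (y + a)) ^ 2`
  have key : f (y + a) * f x * (y + a - x) ^ 2 ≤ f (x + a) * f y * (y + a - x) ^ 2 := by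
    nlinarith [mul_nonneg (mul_nonneg ha (sub_nonneg.2 hxy)) (sq_nonneg (f x - f (y + a)))]
  exact le_of_mul_le_mul_right key (pow_pos (by linarith) 2)

lemma mul_logb_div_eq {b N : ℝ} (hN : N ≠ 0) (x : ℝ) :
    x * logb b (N / x) = (log b)⁻¹ * (log N * x + negMulLog x) := by
  rcases eq_or_ne x 0 with rfl | hx
  · simp
  rw [logb, log_div hN hx, negMulLog]
  ring

lemma concaveOn_mul_logb_div {b N : ℝ} (hb : 1 < b) (hN : N ≠ 0) :
    ConcaveOn ℝ (Ici 0) fun x => x * logb b (N / x) := by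
  simp only [mul_logb_div_eq hN]
  exact (((LinearMap.mulLeft ℝ (log N)).concaveOn (convex_Ici 0)).add concaveOn_negMulLog).smul
    (inv_nonneg.2 (log_pos hb).le)

lemma mul_logb_div_nonneg {b N x : ℝ} (hb : 1 < b) (hx : 0 < x) (hxN : x ≤ N) :
    0 ≤ x * logb b (N / x) :=
  mul_nonneg hx.le (logb_nonneg hb ((one_le_div hx).2 hxN))

lemma mul_logb_div_pos {b N x : ℝ} (hb : 1 < b) (hx : 0 < x) (hxN : x < N) :
    0 < x * logb b (N / x) :=
  mul_pos hx (logb_pos hb ((one_lt_div hx).2 hxN))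

lemma three_mul_log_four_thirds_le : 3 * log (4 / 3) ≤ 4 * log (5 / 4) := by
  have := log_le_log (by norm_num) (by norm_num : (4 / 3 : ℝ) ^ 3 ≤ (5 / 4) ^ 4)
  rwa [log_pow, log_pow, Nat.cast_ofNat, Nat.cast_ofNat] at this

lemma four_fifths_mul_logb_div_three_quarters_le {b N : ℝ} (hb : 1 < b) (hN : 0 < N) :
    4 / 5 * (3 / 4 * N * logb b (N / (3 / 4 * N))) ≤ 4 / 5 * N * logb b (N / (4 / 5 * N)) := by
  have h34 : N / (3 / 4 * N) = 4 / 3 := by field_simp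
  have h45 : N / (4 / 5 * N) = 5 / 4 := by field_simp
  rw [h34, h45, logb, logb]
  have hlogb := log_pos hb
  calc 4 / 5 * (3 / 4 * N * (log (4 / 3) / log b)) = N / 5 * (3 * log (4 / 3)) / log b := by ring
    _ ≤ N / 5 * (4 * log (5 / 4)) / log b := by
        gcongr N / 5 * ?_ / _
        exact three_mul_log_four_thirds_le
    _ = 4 / 5 * N * (log (5 / 4) / log b) := by ring

lemma four_fifths_mul_logb_div_three_quarters_le_of_mem_Icc {b N z : ℝ} (hb : 1 < b) (hN : 0 < N)
    (hz : z ∈ Icc (3 / 4 * N) (4 / 5 * N)) :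
    4 / 5 * (3 / 4 * N * logb b (N / (3 / 4 * N))) ≤ z * logb b (N / z) := by
  have hleft := mul_logb_div_nonneg hb (N := N) (x := 3 / 4 * N) (by positivity) (by linarith)
  have hmin := (concaveOn_mul_logb_div hb hN.ne').min_le_of_mem_Icc
    (mem_Ici.2 (by positivity : (0 : ℝ) ≤ 3 / 4 * N)) (mem_Ici.2 (by positivity)) hz
  exact (le_min (by linarith) (four_fifths_mul_logb_div_three_quarters_le hb hN)).trans hmin

/-- Properties of `f(x) = x·log₂(N/x)` on `(0, N]`: `f` is concave and nonnegative, the ratio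
`x ↦ f(x+a)/f(x)` is decreasing (where defined and positive), and consequently if
`0 < |B| ≤ 3N/4` and `|B| ≤ D ≤ |B| + N/20 ≤ N` then `f(D) ≥ (4/5)·f(|B|)`. -/
theorem log_concave_ratio (N : ℝ) (hN : 0 < N) (f : ℝ → ℝ)
    (hf : ∀ x, f x = x * Real.logb 2 (N / x)) :
    ConcaveOn ℝ (Set.Ioc 0 N) f ∧
    (∀ x ∈ Set.Ioc (0 : ℝ) N, 0 ≤ f x) ∧
    (∀ a : ℝ, 0 < a → ∀ x y : ℝ, 0 < x → x ≤ y → y + a ≤ N → 0 < f x → 0 < f y →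
      f (y + a) / f y ≤ f (x + a) / f x) ∧
    (∀ b D : ℝ, 0 < b → b ≤ 3/4 * N → b ≤ D → D ≤ b + N / 20 → b + N / 20 ≤ N →
      4/5 * f b ≤ f D) := by
  have hconc : ConcaveOn ℝ (Ioc 0 N) f := by
    simpa only [← hf] using (concaveOn_mul_logb_div one_lt_two hN.ne').subset
      (Ioc_subset_Icc_self.trans Icc_subset_Ici_self) (convex_Ioc 0 N)
  have hnonneg : ∀ x ∈ Ioc (0 : ℝ) N, 0 ≤ f x :=
    fun x hx => hf x ▸ mul_logb_div_nonneg one_lt_two hx.1 hx.2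
  refine ⟨hconc, hnonneg, ?_, ?_⟩
  · intro a ha x y hx hxy hyN hfx hfy
    rw [div_le_div_iff₀ hfy hfx]
    exact hconc.map_add_mul_map_le ha.le hxy ⟨hx, by linarith⟩ ⟨by linarith, hyN⟩ hfx.le
      (hnonneg _ ⟨by linarith, hyN⟩)
  · intro b D hb hb34 hbD hD hN20
    obtain ⟨a, ha, rfl⟩ : ∃ a, 0 ≤ a ∧ D = b + a := ⟨D - b, by linarith, by ring⟩
    have hpos : 0 < f (3 / 4 * N) :=
      hf _ ▸ mul_logb_div_pos one_lt_two (by positivity) (by linarith)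
    have hshift : 4 / 5 * f (3 / 4 * N) ≤ f (3 / 4 * N + a) := by
      simpa only [hf] using four_fifths_mul_logb_div_three_quarters_le_of_mem_Icc one_lt_two hN
        (z := 3 / 4 * N + a) ⟨by linarith, by linarith⟩
    have hratio := hconc.map_add_mul_map_le ha hb34 ⟨hb, by linarith⟩ ⟨by linarith, by linarith⟩
      (hnonneg b ⟨hb, by linarith⟩) (hnonneg _ ⟨by linarith, by linarith⟩)
    nlinarith [mul_le_mul_of_nonneg_right hshift (hnonneg b ⟨hb, by linarith⟩)]
end
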